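/- Let Σ_Γ be a subshift of finite type without isolated points or empty cones and let E, E' ⊆ Σ_Γ be nonempty clopen sets. If f : E → E' is a rational homeomorphism, then f⁻¹ : E' → E is rational. Consequently, the set R_{Γ,E} of rational homeomorphisms E → E forms a group under composition. -/

import Mathlib

open scoped Classical

noncomputable section

/-- A finite directed graph (loops and parallel edges are allowed). -/
structure FinDigraph : Type 1 where
  V : Type
  E : Type
  [fintypeV : Fintype V]
  [fintypeE : Fintype E]
  o : E → V
  t : E → V

attribute [instance] FinDigraph.fintypeV FinDigraph.fintypeE

instance (Γ : FinDigraph) : TopologicalSpace Γ.E := ⊥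
instance (Γ : FinDigraph) : DiscreteTopology Γ.E := ⟨rfl⟩

namespace FinDigraph

variable (Γ : FinDigraph)

/-- The subshift of finite type `Σ_Γ`: the set of all infinite directed paths in `Γ`,
viewed as a subset of the product space of all edge sequences (each edge's terminus is
the origin of the next edge). -/
def shift : Set (ℕ → Γ.E) := {x | ∀ i, Γ.t (x i) = Γ.o (x (i + 1))}

/-- Validity of a finite directed path starting at a given node. -/
def pathOk : Γ.V → List Γ.E → Prop
  | _, [] => True
  | v, e :: l => Γ.o e = v ∧ pathOk (Γ.t e) l

/-- A finite directed path in `Γ` (a node together with a compatible list of edges;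
a path with no edges is a node, regarded as a path of length `0`). -/
structure FinPath where
  start : Γ.V
  edges : List Γ.E
  ok : Γ.pathOk start edges

/-- Terminus of a list of edges starting at a given node. -/
def pathEndAux : Γ.V → List Γ.E → Γ.V
  | v, [] => v
  | _, e :: l => pathEndAux (Γ.t e) l

/-- The terminus `t(α)` of a finite directed path. -/
def pathEnd (α : Γ.FinPath) : Γ.V := Γ.pathEndAux α.start α.edges

/-- The length-0 path at a node `v`. -/
def trivPath (v : Γ.V) : Γ.FinPath := ⟨v, [], by simp [pathOk]⟩

/-- The cone `C_α ⊆ Σ_Γ` of all infinite directed paths having `α` as a prefix. -/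
def cone (α : Γ.FinPath) : Set (ℕ → Γ.E) :=
  {x | x ∈ Γ.shift ∧ Γ.o (x 0) = α.start ∧
    ∀ (i : ℕ) (h : i < α.edges.length), x i = α.edges.get ⟨i, h⟩}

/-- The canonical similarity `C_α → C_β` (for `t(α) = t(β)`) on the level of edge
sequences: delete the prefix `α` and attach the prefix `β`. -/
def splice (α β : Γ.FinPath) (x : ℕ → Γ.E) : ℕ → Γ.E := fun i =>
  if h : i < β.edges.length then β.edges.get ⟨i, h⟩
  else x (i - β.edges.length + α.edges.length)

/-- Concatenation `α · ω` of a finite path with an infinite path (on sequences). -/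
def catPath (α : Γ.FinPath) (x : ℕ → Γ.E) : ℕ → Γ.E :=
  Γ.splice (Γ.trivPath (Γ.pathEnd α)) α x

/-- The length of the path `f̄(α)`, i.e. of the greatest common prefix of all points
of `f(C_α)`. -/
def barLen (f : (ℕ → Γ.E) → ℕ → Γ.E) (α : Γ.FinPath) : ℕ :=
  sSup {n | ∀ x ∈ Γ.cone α, ∀ y ∈ Γ.cone α, ∀ i < n, f x i = f y i}

/-- The local action `f|_α : C_{t(α)} → C_{t(f̄(α))}`, determined by
`f(α·ω) = f̄(α)·(f|_α)(ω)`.  It is recorded together with the node `t(α)`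
(the node of its domain cone), and is extended by the identity off the cone
`C_{t(α)}`. -/
def localAction (f : (ℕ → Γ.E) → ℕ → Γ.E) (α : Γ.FinPath) :
    Γ.V × ((ℕ → Γ.E) → ℕ → Γ.E) :=
  (Γ.pathEnd α, fun w =>
    if w ∈ Γ.cone (Γ.trivPath (Γ.pathEnd α)) then
      fun i => f (Γ.catPath α w) (i + Γ.barLen f α)
    else w)

/-- A map is rational (on a domain `D`) if it has only finitely many distinct local
actions at cones contained in `D`. -/
def RationalOn (f : (ℕ → Γ.E) → ℕ → Γ.E) (D : Set (ℕ → Γ.E)) : Prop :=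
  (Γ.localAction f '' {α : Γ.FinPath | Γ.cone α ⊆ D}).Finite

/-- The nucleus `𝒩_f` of a map: the set of local actions `f|_α` that occur for
infinitely many finite paths `α` with `C_α` contained in the domain. -/
def nucleusOf (f : (ℕ → Γ.E) → ℕ → Γ.E) (D : Set (ℕ → Γ.E)) :
    Set (Γ.V × ((ℕ → Γ.E) → ℕ → Γ.E)) :=
  {p | {α : Γ.FinPath | Γ.cone α ⊆ D ∧ Γ.localAction f α = p}.Infinite}

/-- A nondegenerate map on `Σ_Γ` with domain `D`: it takes values in `Σ_Γ` and maps no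
cone contained in `D` to a single point. -/
def Nondegenerate (f : (ℕ → Γ.E) → ℕ → Γ.E) (D : Set (ℕ → Γ.E)) : Prop :=
  (∀ x ∈ D, f x ∈ Γ.shift) ∧
  ∀ α : Γ.FinPath, Γ.cone α ⊆ D → ¬∃ p, ∀ x ∈ Γ.cone α, f x = p

/-- Extension of a map `E → E'` between subsets of the sequence space to a globally
defined map (by the identity off `E`). -/
def homExt (E E' : Set (ℕ → Γ.E)) (f : ↥E → ↥E') : (ℕ → Γ.E) → ℕ → Γ.E :=
  fun x => if h : x ∈ E then ↑(f ⟨x, h⟩) else x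

/-- Extension of a permutation of `E` to a globally defined map. -/
def permExt (E : Set (ℕ → Γ.E)) (g : Equiv.Perm ↥E) : (ℕ → Γ.E) → ℕ → Γ.E :=
  Γ.homExt E E ⇑g

/-- `E` is a clopen subset of the subshift `Σ_Γ`. -/
def ClopenIn (E : Set (ℕ → Γ.E)) : Prop :=
  IsClopen {x : ↥Γ.shift | (x : ℕ → Γ.E) ∈ E}

/-- `U ⊆ Σ_Γ` is open in the subshift. -/
def OpenInShift (U : Set (ℕ → Γ.E)) : Prop :=
  IsOpen {x : ↥Γ.shift | (x : ℕ → Γ.E) ∈ U}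

/-- The subshift `Σ_Γ` has no isolated points. -/
def NoIsolatedPoints : Prop := ∀ x : ↥Γ.shift, ¬IsOpen ({x} : Set ↥Γ.shift)

/-- The subshift `Σ_Γ` has no empty cones. -/
def NoEmptyCones : Prop := ∀ α : Γ.FinPath, (Γ.cone α).Nonempty

/-- A permutation of `E` which is a homeomorphism and is a rational map:
an element of the rational group `R_{Γ,E}`. -/
def IsRatHomeo (E : Set (ℕ → Γ.E)) (g : Equiv.Perm ↥E) : Prop :=
  Continuous ⇑g ∧ Continuous ⇑g.symm ∧ Γ.RationalOn (Γ.permExt E g) E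

/-- `g` maps the cone `C_α` to the cone `C_β` by the canonical similarity
`α·ω ↦ β·ω`. -/
def RealizesCanonSim (E : Set (ℕ → Γ.E)) (g : Equiv.Perm ↥E) (α β : Γ.FinPath) : Prop :=
  ∀ x, ∀ hx : x ∈ E, x ∈ Γ.cone α → ↑(g ⟨x, hx⟩) = Γ.splice α β x

/-- A rational similarity group (RSG): a subgroup of the rational group `R_{Γ,E}` that
realizes the canonical similarity between any two cones `C_α, C_β ⊊ E` with
`t(α) = t(β)`. -/
def IsRSG (E : Set (ℕ → Γ.E)) (G : Subgroup (Equiv.Perm ↥E)) : Prop :=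
  (∀ g ∈ G, Γ.IsRatHomeo E g) ∧
  ∀ α β : Γ.FinPath, Γ.pathEnd α = Γ.pathEnd β → Γ.cone α ⊂ E → Γ.cone β ⊂ E →
    ∃ g ∈ G, Γ.RealizesCanonSim E g α β

/-- `h` locally agrees with the group `G`: every point has an open neighborhood on
which `h` coincides with some element of `G`. -/
def LocallyAgrees (E : Set (ℕ → Γ.E)) (G : Subgroup (Equiv.Perm ↥E))
    (h : Equiv.Perm ↥E) : Prop :=
  ∀ x : ↥E, ∃ U : Set ↥E, IsOpen U ∧ x ∈ U ∧ ∃ g ∈ G, ∀ u ∈ U, h u = g u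

/-- `G` is full as a group of homeomorphisms of `E`: every homeomorphism of `E` that
locally agrees with `G` already belongs to `G`. -/
def IsFullOn (E : Set (ℕ → Γ.E)) (G : Subgroup (Equiv.Perm ↥E)) : Prop :=
  ∀ h : Equiv.Perm ↥E, Continuous ⇑h → Continuous ⇑h.symm →
    Γ.LocallyAgrees E G h → h ∈ G

/-- The nucleus `𝒩_G` of a subgroup `G ≤ R_{Γ,E}`: the union of the nuclei of its
elements. -/
def groupNucleus (E : Set (ℕ → Γ.E)) (G : Subgroup (Equiv.Perm ↥E)) :
    Set (Γ.V × ((ℕ → Γ.E) → ℕ → Γ.E)) :=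
  ⋃ g ∈ G, Γ.nucleusOf (Γ.permExt E g) E

/-- An edge of the induced subgraph on a set `W` of nodes. -/
def InducedEdge (W : Set Γ.V) (e : Γ.E) : Prop := Γ.o e ∈ W ∧ Γ.t e ∈ W

/-- A path of the induced subgraph on `W`. -/
def PathIn (W : Set Γ.V) (α : Γ.FinPath) : Prop :=
  α.start ∈ W ∧ ∀ e ∈ α.edges, Γ.InducedEdge W e

/-- The induced subgraph on `W` is strongly connected and is not a directed cycle,
i.e. `Σ_{Γ₀}` is irreducible (where `Γ₀` is the induced subgraph on `W`). -/
def IrreducibleOn (W : Set Γ.V) : Prop :=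
  (∀ v ∈ W, ∀ w ∈ W, ∃ α : Γ.FinPath,
      α.start = v ∧ Γ.pathEnd α = w ∧ α.edges ≠ [] ∧ Γ.PathIn W α) ∧
  ¬∀ v ∈ W, ∃! e : Γ.E, Γ.InducedEdge W e ∧ Γ.o e = v

/-- `Σ_Γ` has an irreducible core: an induced subgraph `Γ₀` (on a node set `W`) with
`Σ_{Γ₀}` irreducible, such that every node has a directed path to `Γ₀` and every
sufficiently long directed path ends in `Γ₀`. -/
def HasIrreducibleCore : Prop :=
  ∃ W : Set Γ.V, Γ.IrreducibleOn W ∧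
    (∀ v : Γ.V, ∃ α : Γ.FinPath, α.start = v ∧ Γ.pathEnd α ∈ W) ∧
    ∃ N : ℕ, ∀ α : Γ.FinPath, α.edges.length = N → Γ.pathEnd α ∈ W

/-- `G ≤ R_{Γ,E}` is contracting: `Σ_Γ` has an irreducible core and the nucleus `𝒩_G`
is finite. -/
def IsContracting (E : Set (ℕ → Γ.E)) (G : Subgroup (Equiv.Perm ↥E)) : Prop :=
  Γ.HasIrreducibleCore ∧ (Γ.groupNucleus E G).Finite

/-- An element of the Thompson group `V_{Γ,E}`: there are partitions of `E` into cones
`C_{α_1},…,C_{α_k}` and `C_{β_1},…,C_{β_k}` with `t(α_i) = t(β_i)` such that `g` maps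
each `C_{α_i}` to `C_{β_i}` by the canonical similarity. -/
def IsThompson (E : Set (ℕ → Γ.E)) (g : Equiv.Perm ↥E) : Prop :=
  ∃ (k : ℕ) (α β : Fin k → Γ.FinPath),
    (∀ i, Γ.pathEnd (α i) = Γ.pathEnd (β i)) ∧
    E = (⋃ i, Γ.cone (α i)) ∧
    Pairwise (fun i j => Disjoint (Γ.cone (α i)) (Γ.cone (α j))) ∧
    E = (⋃ i, Γ.cone (β i)) ∧
    Pairwise (fun i j => Disjoint (Γ.cone (β i)) (Γ.cone (β j))) ∧
    ∀ i, Γ.RealizesCanonSim E g (α i) (β i)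

/-- A rational (eventually repeating) point `σ·τ^∞` of `Σ_Γ`. -/
def IsRationalPt (x : ℕ → Γ.E) : Prop :=
  ∃ σ τ : Γ.FinPath, τ.edges ≠ [] ∧
    (∀ (i : ℕ) (h : i < σ.edges.length), x i = σ.edges.get ⟨i, h⟩) ∧
    ∀ i : ℕ, σ.edges.length ≤ i →
      ∀ h : (i - σ.edges.length) % τ.edges.length < τ.edges.length,
        x i = τ.edges.get ⟨(i - σ.edges.length) % τ.edges.length, h⟩

/-- `β = f̄(α)`: the cone `C_β` is the smallest cone containing `f(C_α)`, with `β` the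
greatest common prefix of the points of `f(C_α)`. -/
def IsBar (f : (ℕ → Γ.E) → ℕ → Γ.E) (α β : Γ.FinPath) : Prop :=
  f '' Γ.cone α ⊆ Γ.cone β ∧
  ∀ γ : Γ.FinPath, f '' Γ.cone α ⊆ Γ.cone γ →
    Γ.cone β ⊆ Γ.cone γ ∧ γ.edges.length ≤ β.edges.length

end FinDigraph

/-!
The local actions of a rational map are reconstructed from finitely many data. Let `f : E → E'`
be a rational homeomorphism with inverse `g`, and let `β` be a long path with `C_β ⊆ E'`. Uniform
continuity of `g` makes `α = ḡ(β)` long, so `C_α ⊆ E` because `E` is clopen, and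
`f(g(β·ω)) = β·ω` shows that `g|_β` is `(f|_α)⁻¹` composed with either deleting the first edges of
`ω` or prepending a suffix of `β`. At most `D` edges are deleted, where every cone `C_γ` contains
two points differing before position `|γ| + D`; fewer than `K` edges are prepended, where each of
the finitely many local actions `f|_α` separates points with different first edges within its
first `K` edges, again by uniform continuity of `g` on the compact set `E'`. Hence `g` has
finitely many local actions. In the same way `(f₁ ∘ f₂)|_α` is a function of `f₁|_{f̄₂(α)}` and
`f₂|_α`, and `id|_α = id|_{t(α)}`, so the rational homeomorphisms of `E` form a group.
-/

open PiNat Set Filter Topology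

section Cylinders

variable {A B : Type*} [TopologicalSpace A] [DiscreteTopology A]

theorem exists_cylinder_subset {x : ℕ → A} {u : Set (ℕ → A)} (hu : u ∈ 𝓝 x) :
    ∃ n, cylinder x n ⊆ u := by
  obtain ⟨_, ⟨y, n, rfl⟩, hx, hsub⟩ := (isTopologicalBasis_cylinders _).mem_nhds_iff.1 hu
  exact ⟨n, mem_cylinder_iff_eq.1 hx ▸ hsub⟩

theorem IsCompact.exists_cylinder_eq_of_continuousOn [TopologicalSpace B] [DiscreteTopology B]
    {K : Set (ℕ → A)} (hK : IsCompact K) {g : (ℕ → A) → B} (hg : ContinuousOn g K) :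
    ∃ N, ∀ x ∈ K, ∀ y ∈ K, y ∈ cylinder x N → g y = g x := by
  have hloc : ∀ z ∈ K, ∃ n, cylinder z n ∩ K ⊆ g ⁻¹' {g z} := fun z hz => by
    obtain ⟨u, hu, huK⟩ := mem_nhdsWithin_iff_exists_mem_nhds_inter.1
      (hg z hz (isOpen_discrete {g z} |>.mem_nhds rfl))
    obtain ⟨n, hn⟩ := exists_cylinder_subset hu
    exact ⟨n, fun y hy => huK ⟨hn hy.1, hy.2⟩⟩
  choose! n hn using hloc
  obtain ⟨t, htK, hcover⟩ := hK.elim_nhds_subcover (fun z => cylinder z (n z))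
    fun z _ => (isOpen_cylinder _ z (n z)).mem_nhds (self_mem_cylinder z (n z))
  refine ⟨t.sup n, fun x hx y hy hxy => ?_⟩
  obtain ⟨z, hzt, hxz⟩ := mem_iUnion₂.1 (hcover hx)
  have hyz : y ∈ cylinder z (n z) := fun i hi =>
    (hxy i (hi.trans_le (Finset.le_sup hzt))).trans (hxz i hi)
  rw [hn z (htK z hzt) ⟨hyz, hy⟩, hn z (htK z hzt) ⟨hxz, hx⟩]

theorem IsCompact.exists_mapsTo_cylinder {K : Set (ℕ → A)} (hK : IsCompact K)
    {f : (ℕ → A) → ℕ → A} (hf : ContinuousOn f K) (n : ℕ) :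
    ∃ N, ∀ x ∈ K, ∀ y ∈ K, y ∈ cylinder x N → f y ∈ cylinder (f x) n := by
  have hrestr : Continuous fun (y : ℕ → A) (i : Fin n) => y i :=
    continuous_pi fun i => continuous_apply (i : ℕ)
  obtain ⟨N, hN⟩ := hK.exists_cylinder_eq_of_continuousOn (hrestr.comp_continuousOn hf)
  exact ⟨N, fun x hx y hy hxy i hi => congrFun (hN x hx y hy hxy) ⟨i, hi⟩⟩

end Cylinders

namespace FinDigraph

variable {Γ : FinDigraph}

section Sequences

variable {A : Type*}

def seqDrop (n : ℕ) (x : ℕ → A) : ℕ → A := fun i => x (i + n)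

def prependList (l : List A) (w : ℕ → A) : ℕ → A := fun i =>
  if h : i < l.length then l[i] else w (i - l.length)

theorem prependList_of_lt (l : List A) (w : ℕ → A) {i : ℕ} (h : i < l.length) :
    prependList l w i = l[i] := dif_pos h

theorem prependList_of_le (l : List A) (w : ℕ → A) {i : ℕ} (h : l.length ≤ i) :
    prependList l w i = w (i - l.length) := dif_neg (Nat.not_lt.2 h)

@[simp] theorem seqDrop_length_prependList (l : List A) (w : ℕ → A) :
    seqDrop l.length (prependList l w) = w := by
  funext i
  simp [seqDrop, prependList_of_le]

theorem seqDrop_prependList (m : ℕ) (l : List A) (w : ℕ → A) :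
    seqDrop m (prependList l w) = prependList (l.drop m) (seqDrop (m - l.length) w) := by
  funext i
  simp only [seqDrop, prependList, List.length_drop, List.getElem_drop]
  split_ifs <;> first | rfl | omega | (congr 1; omega)

theorem prependList_seqDrop {l : List A} {x : ℕ → A} (hx : ∀ (i) (h : i < l.length), x i = l[i]) :
    prependList l (seqDrop l.length x) = x := by
  funext i
  by_cases h : i < l.length
  · rw [prependList_of_lt _ _ h, hx i h]
  · rw [prependList_of_le _ _ (by omega)]
    simp only [seqDrop]
    congr 1
    omega

end Sequences

theorem isClosed_shift : IsClosed Γ.shift := by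
  have h : Γ.shift = ⋂ i : ℕ, (fun x : ℕ → Γ.E => (x i, x (i + 1))) ⁻¹'
      {p : Γ.E × Γ.E | Γ.t p.1 = Γ.o p.2} := by
    ext x; simp [shift]
  rw [h]
  exact isClosed_iInter fun i => (isClosed_discrete _).preimage
    ((continuous_apply i).prodMk (continuous_apply (i + 1)))

theorem isCompact_shift : IsCompact Γ.shift := isClosed_shift.isCompact

def coneCond (α : Γ.FinPath) : Set (ℕ → Γ.E) :=
  {x | Γ.o (x 0) = α.start} ∩ ⋂ i : Fin α.edges.length, {x | x i = α.edges.get i}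

theorem cone_eq_shift_inter (α : Γ.FinPath) : Γ.cone α = Γ.shift ∩ coneCond α := by
  ext x
  simp only [cone, coneCond, mem_inter_iff, mem_ofPred_eq, mem_iInter, Fin.forall_iff]

theorem isClopen_coneCond (α : Γ.FinPath) : IsClopen (coneCond α) :=
  ((isClopen_discrete {e | Γ.o e = α.start}).preimage (continuous_apply 0)).inter
    (isClopen_iInter_of_finite fun i =>
      (isClopen_discrete {α.edges.get i}).preimage (continuous_apply (i : ℕ)))

theorem cone_nontrivial (hiso : Γ.NoIsolatedPoints) (hcones : Γ.NoEmptyCones)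
    (α : Γ.FinPath) : (Γ.cone α).Nontrivial := by
  obtain ⟨x, hx⟩ := hcones α
  by_contra hsub
  have hsingle : Subtype.val ⁻¹' coneCond α = {(⟨x, hx.1⟩ : ↥Γ.shift)} := by
    ext z
    rw [mem_singleton_iff, Subtype.ext_iff]
    have hz : (z : ℕ → Γ.E) ∈ coneCond α ↔ (z : ℕ → Γ.E) ∈ Γ.cone α := by
      simp [cone_eq_shift_inter, z.2]
    exact hz.trans ⟨fun hz => (not_nontrivial_iff.1 hsub) hz hx, fun hz => hz ▸ hx⟩
  exact hiso ⟨x, hx.1⟩ (hsingle ▸ (isClopen_coneCond α).isOpen.preimage continuous_subtype_val)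

section Paths

theorem pathOk_ofFn {x : ℕ → Γ.E} (hx : x ∈ Γ.shift) (n k : ℕ) :
    Γ.pathOk (Γ.o (x k)) (List.ofFn fun i : Fin n => x (k + i)) := by
  induction n generalizing k with
  | zero => simp [pathOk]
  | succ n ih =>
    rw [List.ofFn_succ]
    refine ⟨by simp, ?_⟩
    simpa [hx k, Nat.add_assoc, Nat.add_comm 1] using ih (k + 1)

theorem pathEndAux_ofFn {x : ℕ → Γ.E} (hx : x ∈ Γ.shift) (n k : ℕ) :
    Γ.pathEndAux (Γ.o (x k)) (List.ofFn fun i : Fin n => x (k + i)) = Γ.o (x (k + n)) := by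
  induction n generalizing k with
  | zero => simp [pathEndAux]
  | succ n ih =>
    rw [List.ofFn_succ]
    simpa [pathEndAux, hx k, Nat.add_assoc, Nat.add_comm 1] using ih (k + 1)

def prefixPath {x : ℕ → Γ.E} (hx : x ∈ Γ.shift) (n : ℕ) : Γ.FinPath :=
  ⟨Γ.o (x 0), List.ofFn fun i : Fin n => x i, by simpa using pathOk_ofFn hx n 0⟩

@[simp] theorem prefixPath_length {x : ℕ → Γ.E} (hx : x ∈ Γ.shift) (n : ℕ) :
    (prefixPath hx n).edges.length = n := by
  simp [prefixPath]

theorem mem_cone_prefixPath {x : ℕ → Γ.E} (hx : x ∈ Γ.shift) {n : ℕ} (hn : 0 < n)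
    {y : ℕ → Γ.E} (hy : y ∈ Γ.shift) (hxy : y ∈ cylinder x n) :
    y ∈ Γ.cone (prefixPath hx n) :=
  ⟨hy, congrArg Γ.o (hxy 0 hn), fun i hi => by simpa [prefixPath] using hxy i (by simpa using hi)⟩

theorem self_mem_cone_prefixPath {x : ℕ → Γ.E} (hx : x ∈ Γ.shift) (n : ℕ) :
    x ∈ Γ.cone (prefixPath hx n) :=
  ⟨hx, rfl, fun i hi => by simp [prefixPath]⟩

theorem mem_cylinder_of_mem_cone {α : Γ.FinPath} {x y : ℕ → Γ.E} (hx : x ∈ Γ.cone α)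
    (hy : y ∈ Γ.cone α) : y ∈ cylinder x α.edges.length := fun i hi =>
  (hy.2.2 i hi).trans (hx.2.2 i hi).symm

theorem pathEnd_eq_of_mem_cone {α : Γ.FinPath} {x : ℕ → Γ.E} (hx : x ∈ Γ.cone α) :
    Γ.pathEnd α = Γ.o (x α.edges.length) := by
  have hedges : α.edges = List.ofFn fun i : Fin α.edges.length => x (0 + i) :=
    List.ext_get (by simp) fun i h _ => by simp [hx.2.2 i h]
  rw [pathEnd, hedges, ← hx.2.1, pathEndAux_ofFn hx.1, Nat.zero_add]
  simp

theorem mem_cone_trivPath {v : Γ.V} {y : ℕ → Γ.E} :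
    y ∈ Γ.cone (Γ.trivPath v) ↔ y ∈ Γ.shift ∧ Γ.o (y 0) = v := by
  simp [cone, trivPath]

theorem catPath_eq_prependList (α : Γ.FinPath) (w : ℕ → Γ.E) :
    Γ.catPath α w = prependList α.edges w := by
  funext i
  simp [catPath, splice, prependList, trivPath]

@[simp] theorem catPath_trivPath (v : Γ.V) (w : ℕ → Γ.E) : Γ.catPath (Γ.trivPath v) w = w := by
  rw [catPath_eq_prependList]
  funext i
  simp [prependList, trivPath]

@[simp] theorem seqDrop_catPath (α : Γ.FinPath) (w : ℕ → Γ.E) :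
    seqDrop α.edges.length (Γ.catPath α w) = w := by
  rw [catPath_eq_prependList, seqDrop_length_prependList]

theorem catPath_seqDrop {α : Γ.FinPath} {x : ℕ → Γ.E} (hx : x ∈ Γ.cone α) :
    Γ.catPath α (seqDrop α.edges.length x) = x := by
  rw [catPath_eq_prependList]
  exact prependList_seqDrop fun i h => hx.2.2 i h

theorem seqDrop_mem_cone {α : Γ.FinPath} {x : ℕ → Γ.E} (hx : x ∈ Γ.cone α) :
    seqDrop α.edges.length x ∈ Γ.cone (Γ.trivPath (Γ.pathEnd α)) :=
  mem_cone_trivPath.2 ⟨fun i => by simpa [seqDrop, Nat.add_right_comm] using hx.1 (i + _),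
    by simp [seqDrop, pathEnd_eq_of_mem_cone hx]⟩

theorem catPath_mem_cone (hcones : Γ.NoEmptyCones) {α : Γ.FinPath} {w : ℕ → Γ.E}
    (hw : w ∈ Γ.cone (Γ.trivPath (Γ.pathEnd α))) : Γ.catPath α w ∈ Γ.cone α := by
  obtain ⟨x, hx⟩ := hcones α
  obtain ⟨hws, hw0⟩ := mem_cone_trivPath.1 hw
  rw [pathEnd_eq_of_mem_cone hx] at hw0
  set n := α.edges.length
  have hlt : ∀ i < n, Γ.catPath α w i = x i := fun i hi => by
    rw [catPath_eq_prependList, prependList_of_lt _ _ hi, hx.2.2 i hi, List.get_eq_getElem]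
  have hge : ∀ i, n ≤ i → Γ.catPath α w i = w (i - n) := fun i hi => by
    rw [catPath_eq_prependList, prependList_of_le _ _ hi]
  refine ⟨fun i => ?_, ?_, fun i hi => (hlt i hi).trans (hx.2.2 i hi)⟩
  · rcases lt_trichotomy (i + 1) n with h | h | h
    · rw [hlt i (by omega), hlt (i + 1) h]
      exact hx.1 i
    · rw [hlt i (by omega), hge (i + 1) h.ge, h, Nat.sub_self, hw0, ← h]
      exact hx.1 i
    · rw [hge i (by omega), hge (i + 1) (by omega), Nat.sub_add_comm (by omega)]
      exact hws _
  · rcases Nat.eq_zero_or_pos n with h | h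
    · rw [hge 0 (by omega), Nat.zero_sub, hw0, h]
      exact hx.2.1
    · rw [hlt 0 h]
      exact hx.2.1

end Paths

section LocalActions

variable {f g : (ℕ → Γ.E) → ℕ → Γ.E} {α : Γ.FinPath}

variable (Γ) in
def agreeSet (f : (ℕ → Γ.E) → ℕ → Γ.E) (α : Γ.FinPath) : Set ℕ :=
  {n | ∀ x ∈ Γ.cone α, ∀ y ∈ Γ.cone α, ∀ i < n, f x i = f y i}

theorem barLen_eq_sSup : Γ.barLen f α = sSup (Γ.agreeSet f α) := rfl

/-- Also true when `agreeSet f α` is unbounded, since then `barLen f α = 0`. -/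
theorem agree_below_barLen {x y : ℕ → Γ.E} (hx : x ∈ Γ.cone α) (hy : y ∈ Γ.cone α) {i : ℕ}
    (hi : i < Γ.barLen f α) : f x i = f y i := by
  by_cases hb : BddAbove (Γ.agreeSet f α)
  · exact Nat.sSup_mem ⟨0, fun _ _ _ _ _ h => absurd h (Nat.not_lt_zero _)⟩ hb x hx y hy i hi
  · rw [barLen_eq_sSup, Nat.sSup_of_not_bddAbove hb] at hi
    exact absurd hi (Nat.not_lt_zero _)

theorem bddAbove_agreeSet (hiso : Γ.NoIsolatedPoints) (hcones : Γ.NoEmptyCones)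
    (hf : InjOn f (Γ.cone α)) : BddAbove (Γ.agreeSet f α) := by
  obtain ⟨x, hx, y, hy, hxy⟩ := cone_nontrivial hiso hcones α
  obtain ⟨i, hi⟩ := Function.ne_iff.1 (hf.ne hx hy hxy)
  exact ⟨i, fun n hn => not_lt.1 fun hin => hi (hn x hx y hy i hin)⟩

theorem exists_ne_at_barLen (hb : BddAbove (Γ.agreeSet f α)) :
    ∃ x ∈ Γ.cone α, ∃ y ∈ Γ.cone α, f x (Γ.barLen f α) ≠ f y (Γ.barLen f α) := by
  have hnot : Γ.barLen f α + 1 ∉ Γ.agreeSet f α := fun h => by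
    have := le_csSup hb h
    rw [← barLen_eq_sSup] at this
    omega
  simp only [agreeSet, mem_ofPred_eq, not_forall] at hnot
  obtain ⟨x, hx, y, hy, i, hi, hne⟩ := hnot
  obtain rfl : i = Γ.barLen f α := by
    by_contra h
    exact hne (agree_below_barLen hx hy (by omega))
  exact ⟨x, hx, y, hy, hne⟩

theorem localAction_snd_of_mem {w : ℕ → Γ.E} (hw : w ∈ Γ.cone (Γ.trivPath (Γ.pathEnd α))) :
    (Γ.localAction f α).2 w = seqDrop (Γ.barLen f α) (f (Γ.catPath α w)) := if_pos hw

theorem localAction_snd_of_not_mem {w : ℕ → Γ.E}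
    (hw : w ∉ Γ.cone (Γ.trivPath (Γ.pathEnd α))) : (Γ.localAction f α).2 w = w := if_neg hw

theorem localAction_snd_seqDrop {x : ℕ → Γ.E} (hx : x ∈ Γ.cone α) :
    (Γ.localAction f α).2 (seqDrop α.edges.length x) = seqDrop (Γ.barLen f α) (f x) := by
  rw [localAction_snd_of_mem (seqDrop_mem_cone hx), catPath_seqDrop hx]

theorem injOn_localAction_snd (hcones : Γ.NoEmptyCones) (hf : InjOn f (Γ.cone α)) :
    InjOn (Γ.localAction f α).2 (Γ.cone (Γ.trivPath (Γ.pathEnd α))) := by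
  intro u hu u' hu' h
  have hx := catPath_mem_cone hcones hu
  have hx' := catPath_mem_cone hcones hu'
  rw [localAction_snd_of_mem hu, localAction_snd_of_mem hu'] at h
  have heq : f (Γ.catPath α u) = f (Γ.catPath α u') := funext fun i => by
    rcases lt_or_ge i (Γ.barLen f α) with hi | hi
    · exact agree_below_barLen hx hx' hi
    · simpa [seqDrop, Nat.sub_add_cancel hi] using congrFun h (i - Γ.barLen f α)
  simpa using congrArg (seqDrop α.edges.length) (hf hx hx' heq)

/-- In the notation of local actions: if `f(α·ω) = γ·g(ω)` for all `ω ∈ C_{t(α)}`, with `γ` of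
length `c`, then `f|_α = g|_{t(α)}`. -/
theorem localAction_eq_localAction_trivPath (hcones : Γ.NoEmptyCones)
    (hbdd : BddAbove (Γ.agreeSet f α)) {c : ℕ} (hc : c ∈ Γ.agreeSet f α)
    (hg : ∀ x ∈ Γ.cone α, seqDrop c (f x) = g (seqDrop α.edges.length x)) :
    Γ.localAction f α = Γ.localAction g (Γ.trivPath (Γ.pathEnd α)) := by
  set v := Γ.pathEnd α
  set m := Γ.barLen f α
  have hm : m ∈ Γ.agreeSet f α := Nat.sSup_mem ⟨c, hc⟩ hbdd
  have hcm : c ≤ m := le_csSup hbdd hc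
  have hdrop : ∀ w ∈ Γ.cone (Γ.trivPath v), ∀ i, g w i = f (Γ.catPath α w) (i + c) :=
    fun w hw i => by
      have h := congrFun (hg _ (catPath_mem_cone hcones hw)) i
      rw [seqDrop_catPath] at h
      exact h.symm
  have hto : ∀ k, c + k ∈ Γ.agreeSet f α → k ∈ Γ.agreeSet g (Γ.trivPath v) :=
    fun k hk w hw w' hw' i hi => by
      rw [hdrop w hw, hdrop w' hw']
      exact hk _ (catPath_mem_cone hcones hw) _ (catPath_mem_cone hcones hw') _ (by omega)
  have hfrom : ∀ k ∈ Γ.agreeSet g (Γ.trivPath v), c + k ∈ Γ.agreeSet f α :=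
    fun k hk x hx y hy i hi => by
      rcases lt_or_ge i c with hic | hic
      · exact hc x hx y hy i hic
      · have hxy := hk _ (seqDrop_mem_cone hx) _ (seqDrop_mem_cone hy) (i - c) (by omega)
        rw [← hg x hx, ← hg y hy] at hxy
        simpa [seqDrop, Nat.sub_add_cancel hic] using hxy
  have hbar : Γ.barLen g (Γ.trivPath v) = m - c :=
    IsGreatest.csSup_eq ⟨hto _ (by rwa [Nat.add_sub_cancel' hcm]),
      fun k hk => by have : c + k ≤ m := le_csSup hbdd (hfrom k hk); omega⟩
  refine Prod.ext rfl (funext fun w => ?_)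
  by_cases hw : w ∈ Γ.cone (Γ.trivPath v)
  · rw [localAction_snd_of_mem hw, localAction_snd_of_mem (α := Γ.trivPath v) hw, hbar,
      catPath_trivPath]
    funext i
    rw [seqDrop, seqDrop, hdrop w hw]
    congr 1
    omega
  · rw [localAction_snd_of_not_mem hw, localAction_snd_of_not_mem (α := Γ.trivPath v) hw]

theorem mapsTo_cone_prefixPath {x₁ : ℕ → Γ.E} (hx₁ : x₁ ∈ Γ.cone α)
    (hf : MapsTo f (Γ.cone α) Γ.shift) (hpos : 0 < Γ.barLen f α) :
    MapsTo f (Γ.cone α) (Γ.cone (prefixPath (hf hx₁) (Γ.barLen f α))) := fun _ hx =>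
  mem_cone_prefixPath _ hpos (hf hx) fun _ hi => agree_below_barLen hx hx₁ hi

end LocalActions

section Compactness

theorem ClopenIn.isCompact {E : Set (ℕ → Γ.E)} (hE : E ⊆ Γ.shift) (hEc : Γ.ClopenIn E) :
    IsCompact E := by
  have := isCompact_iff_compactSpace.1 (isCompact_shift (Γ := Γ))
  have himage : Subtype.val '' {x : ↥Γ.shift | (x : ℕ → Γ.E) ∈ E} = E := by
    rw [← preimage_ofPred_eq, ofPred_mem_eq, Subtype.image_preimage_coe, inter_eq_right.2 hE]
  exact himage ▸ Subtype.isCompact_iff.1 hEc.isClosed.isCompact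

theorem ClopenIn.exists_cone_prefixPath_subset {E : Set (ℕ → Γ.E)} (hE : E ⊆ Γ.shift)
    (hEc : Γ.ClopenIn E) :
    ∃ N, ∀ x (hx : x ∈ E) n, N < n → Γ.cone (prefixPath (hE hx) n) ⊆ E := by
  obtain ⟨N, hN⟩ := isCompact_shift.exists_cylinder_eq_of_continuousOn
    ((continuousOn_boolIndicator_iff_isClopen Γ.shift E).2 hEc)
  refine ⟨N, fun x hx n hn y hy => ?_⟩
  have hxy : y ∈ cylinder x N := cylinder_anti x hn.le <| by
    simpa using mem_cylinder_of_mem_cone (self_mem_cone_prefixPath (hE hx) n) hy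
  rw [mem_iff_boolIndicator, hN x (hE hx) y hy.1 hxy, ← mem_iff_boolIndicator]
  exact hx

theorem exists_le_barLen (hiso : Γ.NoIsolatedPoints) (hcones : Γ.NoEmptyCones)
    {f : (ℕ → Γ.E) → ℕ → Γ.E} {K : Set (ℕ → Γ.E)} (hK : IsCompact K) (hf : ContinuousOn f K)
    (hinj : InjOn f K) (n : ℕ) :
    ∃ N, ∀ α, Γ.cone α ⊆ K → N ≤ α.edges.length → n ≤ Γ.barLen f α := by
  obtain ⟨N, hN⟩ := hK.exists_mapsTo_cylinder hf n
  refine ⟨N, fun α hα hlen => le_csSup (bddAbove_agreeSet hiso hcones (hinj.mono hα)) ?_⟩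
  intro x hx y hy i hi
  exact (hN x (hα hx) y (hα hy) (cylinder_anti x hlen (mem_cylinder_of_mem_cone hx hy)) i hi).symm

theorem exists_branching_bound (hiso : Γ.NoIsolatedPoints) (hcones : Γ.NoEmptyCones) :
    ∃ D, ∀ α : Γ.FinPath, ∃ z ∈ Γ.cone α, ∃ z' ∈ Γ.cone α,
      ∃ i < α.edges.length + D, z i ≠ z' i := by
  have hv : ∀ v : Γ.V, ∃ i, ∃ u ∈ Γ.cone (Γ.trivPath v), ∃ u' ∈ Γ.cone (Γ.trivPath v),
      u i ≠ u' i := fun v => by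
    obtain ⟨u, hu, u', hu', hne⟩ := cone_nontrivial hiso hcones (Γ.trivPath v)
    obtain ⟨i, hi⟩ := Function.ne_iff.1 hne
    exact ⟨i, u, hu, u', hu', hi⟩
  choose idx u hu u' hu' hne using hv
  obtain ⟨D, hD⟩ := Finite.exists_le idx
  refine ⟨D + 1, fun α => ⟨_, catPath_mem_cone hcones (hu _), _, catPath_mem_cone hcones (hu' _),
    α.edges.length + idx (Γ.pathEnd α), by have := hD (Γ.pathEnd α); omega, ?_⟩⟩
  rw [catPath_eq_prependList, catPath_eq_prependList, prependList_of_le _ _ (by omega),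
    prependList_of_le _ _ (by omega), Nat.add_sub_cancel_left]
  exact hne _

end Compactness

section Rationality

theorem finite_setOf_length_lt (n : ℕ) : {α : Γ.FinPath | α.edges.length < n}.Finite := by
  have hinj : Function.Injective fun α : Γ.FinPath => (α.start, α.edges) := by
    rintro ⟨_, _, _⟩ ⟨_, _, _⟩ h
    simp_all
  refine ((finite_univ.prod (List.finite_length_lt Γ.E n)).preimage hinj.injOn).subset ?_
  intro α hα
  exact ⟨mem_univ _, hα⟩

theorem rationalOn_of_forall_mem {f : (ℕ → Γ.E) → ℕ → Γ.E} {D : Set (ℕ → Γ.E)}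
    {T : Set (Γ.V × ((ℕ → Γ.E) → ℕ → Γ.E))} (hT : T.Finite) (n : ℕ)
    (h : ∀ α, Γ.cone α ⊆ D → n ≤ α.edges.length → Γ.localAction f α ∈ T) :
    Γ.RationalOn f D := by
  refine (((finite_setOf_length_lt n).image (Γ.localAction f)).union hT).subset ?_
  rintro _ ⟨α, hα, rfl⟩
  by_cases hlen : α.edges.length < n
  · exact Or.inl ⟨α, hlen, rfl⟩
  · exact Or.inr (h α hα (by omega))

theorem rationalOn_id (hiso : Γ.NoIsolatedPoints) (hcones : Γ.NoEmptyCones)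
    (D : Set (ℕ → Γ.E)) : Γ.RationalOn id D := by
  refine rationalOn_of_forall_mem (finite_range fun v => Γ.localAction id (Γ.trivPath v)) 0
    fun α _ _ => ⟨Γ.pathEnd α, ?_⟩
  exact (localAction_eq_localAction_trivPath (f := id) (g := id) hcones
    (bddAbove_agreeSet hiso hcones (injOn_id _))
    (fun _ hx _ hy => mem_cylinder_of_mem_cone hy hx) fun _ _ => rfl).symm

end Rationality

section Composition

theorem localAction_comp (hiso : Γ.NoIsolatedPoints) (hcones : Γ.NoEmptyCones)
    {F₁ F₂ : (ℕ → Γ.E) → ℕ → Γ.E} {α ᾱ : Γ.FinPath} (hinj : InjOn (F₁ ∘ F₂) (Γ.cone α))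
    (hF₂ : MapsTo F₂ (Γ.cone α) (Γ.cone ᾱ)) (hlen : ᾱ.edges.length = Γ.barLen F₂ α) :
    Γ.localAction (F₁ ∘ F₂) α = Γ.localAction ((Γ.localAction F₁ ᾱ).2 ∘ (Γ.localAction F₂ α).2)
      (Γ.trivPath (Γ.pathEnd α)) :=
  localAction_eq_localAction_trivPath hcones (bddAbove_agreeSet hiso hcones hinj)
    (c := Γ.barLen F₁ ᾱ) (fun _ hx _ hy _ hi => agree_below_barLen (hF₂ hx) (hF₂ hy) hi)
    fun x hx => by
      simp only [Function.comp_apply]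
      rw [localAction_snd_seqDrop hx, ← hlen, localAction_snd_seqDrop (hF₂ hx)]

theorem RationalOn.comp (hiso : Γ.NoIsolatedPoints) (hcones : Γ.NoEmptyCones)
    {F₁ F₂ : (ℕ → Γ.E) → ℕ → Γ.E} {E E' : Set (ℕ → Γ.E)} (hE : IsCompact E)
    (hE' : E' ⊆ Γ.shift) (hE'c : Γ.ClopenIn E') (hF₂ : MapsTo F₂ E E')
    (hF₂c : ContinuousOn F₂ E) (hinj : InjOn (F₁ ∘ F₂) E) (h₁ : Γ.RationalOn F₁ E')
    (h₂ : Γ.RationalOn F₂ E) : Γ.RationalOn (F₁ ∘ F₂) E := by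
  obtain ⟨N, hN⟩ := hE'c.exists_cone_prefixPath_subset hE'
  obtain ⟨B, hB⟩ := exists_le_barLen hiso hcones hE hF₂c hinj.of_comp (N + 1)
  refine rationalOn_of_forall_mem ((h₁.prod h₂).image fun q =>
    Γ.localAction (q.1.2 ∘ q.2.2) (Γ.trivPath q.2.1)) B fun α hα hlen => ?_
  obtain ⟨x₁, hx₁⟩ := hcones α
  have hpos := hB α hα hlen
  have hmaps : MapsTo F₂ (Γ.cone α) Γ.shift := fun _ hx => hE' (hF₂ (hα hx))
  set ᾱ := prefixPath (hmaps hx₁) (Γ.barLen F₂ α)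
  refine ⟨(Γ.localAction F₁ ᾱ, Γ.localAction F₂ α),
    ⟨⟨ᾱ, hN _ (hF₂ (hα hx₁)) _ (by omega), rfl⟩, α, hα, rfl⟩, ?_⟩
  exact (localAction_comp hiso hcones (hinj.mono hα) (mapsTo_cone_prefixPath hx₁ hmaps (by omega))
    (prefixPath_length _ _)).symm

end Composition

section Inverse

def SeparatesWithin (q : Γ.V × ((ℕ → Γ.E) → ℕ → Γ.E)) (K : ℕ) : Prop :=
  ∀ u ∈ Γ.cone (Γ.trivPath q.1), ∀ u' ∈ Γ.cone (Γ.trivPath q.1), u 0 ≠ u' 0 →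
    ∃ j < K, q.2 u j ≠ q.2 u' j

variable {F G : (ℕ → Γ.E) → ℕ → Γ.E} {E E' : Set (ℕ → Γ.E)}

/-- A consequence of the uniform continuity of the inverse `G` on the compact set `E'`. -/
theorem eventually_separatesWithin_localAction (hcones : Γ.NoEmptyCones) (hF : MapsTo F E E')
    (hGF : LeftInvOn G F E) (hE' : IsCompact E') (hG : ContinuousOn G E') {α : Γ.FinPath}
    (hα : Γ.cone α ⊆ E) : ∀ᶠ K in atTop, SeparatesWithin (Γ.localAction F α) K := by
  obtain ⟨N, hN⟩ := hE'.exists_mapsTo_cylinder hG (α.edges.length + 1)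
  filter_upwards [eventually_ge_atTop N] with K hK u hu u' hu' h0
  have hx := catPath_mem_cone hcones hu
  have hx' := catPath_mem_cone hcones hu'
  have hnot : F (Γ.catPath α u') ∉ cylinder (F (Γ.catPath α u)) N := fun hc => h0 <| by
    have h := hN _ (hF (hα hx)) _ (hF (hα hx')) hc α.edges.length (by omega)
    rw [hGF (hα hx), hGF (hα hx'), catPath_eq_prependList, catPath_eq_prependList,
      prependList_of_le _ _ le_rfl, prependList_of_le _ _ le_rfl, Nat.sub_self] at h
    exact h.symm
  simp only [mem_cylinder_iff, not_forall] at hnot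
  obtain ⟨j, hj, hne⟩ := hnot
  have hmj : Γ.barLen F α ≤ j := not_lt.1 fun h => hne (agree_below_barLen hx' hx h)
  refine ⟨j - Γ.barLen F α, by omega, ?_⟩
  rw [localAction_snd_of_mem hu, localAction_snd_of_mem hu']
  simpa [seqDrop, Nat.sub_add_cancel hmj] using Ne.symm hne

theorem exists_separatesWithin (hcones : Γ.NoEmptyCones) (hF : MapsTo F E E')
    (hGF : LeftInvOn G F E) (hE' : IsCompact E') (hG : ContinuousOn G E')
    (hrat : Γ.RationalOn F E) :
    ∃ K, ∀ α, Γ.cone α ⊆ E → SeparatesWithin (Γ.localAction F α) K := by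
  obtain ⟨K, hK⟩ := ((eventually_all_finite hrat).2 <| by
    rintro _ ⟨α, hα, rfl⟩
    exact eventually_separatesWithin_localAction hcones hF hGF hE' hG hα).exists
  exact ⟨K, fun α hα => hK _ ⟨α, hα, rfl⟩⟩

/-- Since `F(G(β·ω)) = β·ω`, the local action `F|_α` sends `G|_β(ω)` to `β·ω` with its first
`|F̄(α)|` edges removed. -/
theorem localAction_eq_of_leftInvOn (hiso : Γ.NoIsolatedPoints) (hcones : Γ.NoEmptyCones)
    [Nonempty (ℕ → Γ.E)] {α β : Γ.FinPath} (hFG : LeftInvOn F G (Γ.cone β))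
    (hF : InjOn F (Γ.cone α)) (hG : MapsTo G (Γ.cone β) (Γ.cone α)) :
    Γ.localAction G β = Γ.localAction
      (Function.invFunOn (Γ.localAction F α).2 (Γ.cone (Γ.trivPath (Γ.pathEnd α))) ∘
        prependList (β.edges.drop (Γ.barLen F α)) ∘
        seqDrop (Γ.barLen F α - β.edges.length)) (Γ.trivPath (Γ.pathEnd β)) := by
  refine localAction_eq_localAction_trivPath hcones (bddAbove_agreeSet hiso hcones hFG.injOn)
    (c := α.edges.length) (fun _ hx _ hy => mem_cylinder_of_mem_cone (hG hy) (hG hx))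
    fun y hy => ?_
  have hq : (Γ.localAction F α).2 (seqDrop α.edges.length (G y)) =
      prependList (β.edges.drop (Γ.barLen F α))
        (seqDrop (Γ.barLen F α - β.edges.length) (seqDrop β.edges.length y)) := by
    rw [localAction_snd_seqDrop (hG hy), hFG hy, ← seqDrop_prependList,
      ← catPath_eq_prependList, catPath_seqDrop hy]
  rw [Function.comp_apply, Function.comp_apply, ← hq,
    (injOn_localAction_snd hcones hF).leftInvOn_invFunOn (seqDrop_mem_cone (hG hy))]

theorem barLen_lt_of_leftInvOn {D : ℕ} {α β : Γ.FinPath}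
    (hD : ∃ z ∈ Γ.cone β, ∃ z' ∈ Γ.cone β, ∃ i < β.edges.length + D, z i ≠ z' i)
    (hFG : LeftInvOn F G (Γ.cone β)) (hG : MapsTo G (Γ.cone β) (Γ.cone α)) :
    Γ.barLen F α < β.edges.length + D := by
  obtain ⟨z, hz, z', hz', i, hi, hne⟩ := hD
  refine lt_of_not_ge fun h => hne ?_
  rw [← hFG hz, ← hFG hz']
  exact agree_below_barLen (hG hz) (hG hz') (by omega)

theorem length_lt_barLen_add {K : ℕ} {α β : Γ.FinPath}
    (hsep : SeparatesWithin (Γ.localAction F α) K) (hFG : LeftInvOn F G (Γ.cone β))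
    (hG : MapsTo G (Γ.cone β) (Γ.cone α)) (hlen : α.edges.length = Γ.barLen G β)
    (hbdd : BddAbove (Γ.agreeSet G β)) : β.edges.length < Γ.barLen F α + K := by
  obtain ⟨y, hy, y', hy', hne⟩ := exists_ne_at_barLen hbdd
  obtain ⟨j, hj, hjne⟩ := hsep _ (seqDrop_mem_cone (hG hy)) _ (seqDrop_mem_cone (hG hy'))
    (by simpa [seqDrop, hlen] using hne)
  rw [localAction_snd_seqDrop (hG hy), localAction_snd_seqDrop (hG hy'), hFG hy, hFG hy'] at hjne
  refine lt_of_not_ge fun h => hjne ?_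
  exact (mem_cylinder_of_mem_cone hy hy' (j + Γ.barLen F α) (by omega)).symm

theorem RationalOn.invOn (hiso : Γ.NoIsolatedPoints) (hcones : Γ.NoEmptyCones)
    (hE : E ⊆ Γ.shift) (hEc : Γ.ClopenIn E) (hE' : IsCompact E') (hF : MapsTo F E E')
    (hG : MapsTo G E' E) (hinv : InvOn G F E E') (hGc : ContinuousOn G E')
    (hrat : Γ.RationalOn F E) : Γ.RationalOn G E' := by
  -- `Function.invFunOn` below needs a point; without one there are no cones at all.
  rcases isEmpty_or_nonempty (ℕ → Γ.E) with _ | _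
  · exact finite_empty.subset fun _ ⟨β, _, _⟩ => isEmptyElim (hcones β).some
  obtain ⟨D, hD⟩ := exists_branching_bound hiso hcones
  obtain ⟨K, hK⟩ := exists_separatesWithin hcones hF hinv.1 hE' hGc hrat
  obtain ⟨N, hN⟩ := hEc.exists_cone_prefixPath_subset hE
  obtain ⟨B, hB⟩ := exists_le_barLen hiso hcones hE' hGc hinv.2.injOn (N + 1)
  refine rationalOn_of_forall_mem
    ((hrat.prod ((List.finite_length_le Γ.E K).prod ((finite_Iic D).prod finite_univ))).image
      fun p => Γ.localAction (Function.invFunOn p.1.2 (Γ.cone (Γ.trivPath p.1.1)) ∘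
        prependList p.2.1 ∘ seqDrop p.2.2.1) (Γ.trivPath p.2.2.2)) B fun β hβ hlen => ?_
  obtain ⟨y₁, hy₁⟩ := hcones β
  have hpos := hB β hβ hlen
  have hmaps : MapsTo G (Γ.cone β) Γ.shift := fun _ hy => hE (hG (hβ hy))
  set α := prefixPath (hmaps hy₁) (Γ.barLen G β)
  have hαE : Γ.cone α ⊆ E := hN _ (hG (hβ hy₁)) _ (by omega)
  have hGβ : MapsTo G (Γ.cone β) (Γ.cone α) := mapsTo_cone_prefixPath hy₁ hmaps (by omega)
  have hFG : LeftInvOn F G (Γ.cone β) := hinv.2.mono hβ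
  have hm := barLen_lt_of_leftInvOn (hD β) hFG hGβ
  have hδ := length_lt_barLen_add (hK α hαE) hFG hGβ (prefixPath_length _ _)
    (bddAbove_agreeSet hiso hcones hFG.injOn)
  refine ⟨(Γ.localAction F α, β.edges.drop (Γ.barLen F α), Γ.barLen F α - β.edges.length,
    Γ.pathEnd β), ⟨⟨α, hαE, rfl⟩,
    by simp only [mem_ofPred_eq, List.length_drop]; omega, by simp only [mem_Iic]; omega,
    trivial⟩, ?_⟩
  exact (localAction_eq_of_leftInvOn hiso hcones hFG (hinv.1.injOn.mono hαE) hGβ).symm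

end Inverse

section Homeomorphisms

variable {E E' : Set (ℕ → Γ.E)}

theorem homExt_of_mem (f : E → E') {x : ℕ → Γ.E} (hx : x ∈ E) :
    Γ.homExt E E' f x = f ⟨x, hx⟩ := dif_pos hx

theorem mapsTo_homExt (f : E → E') : MapsTo (Γ.homExt E E' f) E E' := fun x hx => by
  rw [homExt_of_mem f hx]
  exact (f _).2

theorem injOn_homExt {f : E → E'} (hf : Function.Injective f) : InjOn (Γ.homExt E E' f) E :=
  fun x hx y hy h => by
    rw [homExt_of_mem f hx, homExt_of_mem f hy] at h
    exact congrArg Subtype.val (hf (Subtype.ext h))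

theorem invOn_homExt (f : E ≃ E') : InvOn (Γ.homExt E' E f.symm) (Γ.homExt E E' f) E E' :=
  ⟨fun x hx => by simp [homExt_of_mem _ hx, homExt_of_mem _ (f ⟨x, hx⟩).2],
    fun y hy => by simp [homExt_of_mem _ hy, homExt_of_mem _ (f.symm ⟨y, hy⟩).2]⟩

theorem continuousOn_homExt {f : E → E'} (hf : Continuous f) :
    ContinuousOn (Γ.homExt E E' f) E := by
  rw [continuousOn_iff_continuous_domRestrict]
  exact (continuous_subtype_val.comp hf).congr fun x => (homExt_of_mem f x.2).symm

theorem RationalOn.homExt_symm (hiso : Γ.NoIsolatedPoints) (hcones : Γ.NoEmptyCones)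
    (hE : E ⊆ Γ.shift) (hEc : Γ.ClopenIn E) (hE' : E' ⊆ Γ.shift) (hE'c : Γ.ClopenIn E')
    (f : E ≃ₜ E') (hf : Γ.RationalOn (Γ.homExt E E' f) E) :
    Γ.RationalOn (Γ.homExt E' E f.symm) E' :=
  hf.invOn hiso hcones hE hEc (hE'c.isCompact hE') (mapsTo_homExt f) (mapsTo_homExt f.symm)
    (invOn_homExt f.toEquiv) (continuousOn_homExt f.symm.continuous)

theorem permExt_mul (g₁ g₂ : Equiv.Perm E) :
    Γ.permExt E (g₁ * g₂) = Γ.permExt E g₁ ∘ Γ.permExt E g₂ := by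
  funext x
  by_cases hx : x ∈ E
  · simp [permExt, homExt_of_mem _ hx, homExt_of_mem _ (g₂ ⟨x, hx⟩).2]
  · simp [permExt, homExt, hx]

theorem permExt_one : Γ.permExt E 1 = id := by
  funext x
  by_cases hx : x ∈ E <;> simp [permExt, homExt, hx]

theorem IsRatHomeo.mul (hiso : Γ.NoIsolatedPoints) (hcones : Γ.NoEmptyCones)
    (hE : E ⊆ Γ.shift) (hEc : Γ.ClopenIn E) {g₁ g₂ : Equiv.Perm E} (h₁ : Γ.IsRatHomeo E g₁)
    (h₂ : Γ.IsRatHomeo E g₂) : Γ.IsRatHomeo E (g₁ * g₂) := by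
  refine ⟨h₁.1.comp h₂.1, h₂.2.1.comp h₁.2.1, ?_⟩
  rw [permExt_mul]
  exact h₁.2.2.comp hiso hcones (hEc.isCompact hE) hE hEc (mapsTo_homExt _)
    (continuousOn_homExt h₂.1) (permExt_mul g₁ g₂ ▸ injOn_homExt (g₁ * g₂).injective) h₂.2.2

theorem IsRatHomeo.inv (hiso : Γ.NoIsolatedPoints) (hcones : Γ.NoEmptyCones)
    (hE : E ⊆ Γ.shift) (hEc : Γ.ClopenIn E) {g : Equiv.Perm E} (h : Γ.IsRatHomeo E g) :
    Γ.IsRatHomeo E g⁻¹ :=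
  ⟨h.2.1, h.1, h.2.2.homExt_symm hiso hcones hE hEc hE hEc ⟨g, h.1, h.2.1⟩⟩

theorem isRatHomeo_one (hiso : Γ.NoIsolatedPoints) (hcones : Γ.NoEmptyCones) :
    Γ.IsRatHomeo E 1 :=
  ⟨continuous_id, continuous_id, permExt_one (Γ := Γ) ▸ rationalOn_id hiso hcones E⟩

/-- The rational group `R_{Γ,E}`. -/
def ratGroup (hiso : Γ.NoIsolatedPoints) (hcones : Γ.NoEmptyCones) (hE : E ⊆ Γ.shift)
    (hEc : Γ.ClopenIn E) : Subgroup (Equiv.Perm E) where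
  carrier := {g | Γ.IsRatHomeo E g}
  mul_mem' := IsRatHomeo.mul hiso hcones hE hEc
  one_mem' := isRatHomeo_one hiso hcones
  inv_mem' := IsRatHomeo.inv hiso hcones hE hEc

end Homeomorphisms

end FinDigraph

theorem inverse_rational_and_rational_group_general (Γ : FinDigraph)
    (hiso : Γ.NoIsolatedPoints) (hcones : Γ.NoEmptyCones)
    (E E' : Set (ℕ → Γ.E)) (hEsub : E ⊆ Γ.shift)
    (hEclopen : Γ.ClopenIn E) (hE'sub : E' ⊆ Γ.shift)
    (hE'clopen : Γ.ClopenIn E')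
    (f : ↥E ≃ₜ ↥E') (hf : Γ.RationalOn (Γ.homExt E E' ⇑f) E) :
    Γ.RationalOn (Γ.homExt E' E ⇑f.symm) E' ∧
    ∃ R : Subgroup (Equiv.Perm ↥E),
      (R : Set (Equiv.Perm ↥E)) = {g | Γ.IsRatHomeo E g} :=
  ⟨hf.homExt_symm hiso hcones hEsub hEclopen hE'sub hE'clopen f,
    FinDigraph.ratGroup hiso hcones hEsub hEclopen, rfl⟩

/-- The inverse of a rational homeomorphism between nonempty clopen subsets of `Σ_Γ` is
rational; consequently the rational homeomorphisms `E → E` form a group `R_{Γ,E}` under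
composition. -/
theorem inverse_rational_and_rational_group (Γ : FinDigraph)
    (hiso : Γ.NoIsolatedPoints) (hcones : Γ.NoEmptyCones)
    (E E' : Set (ℕ → Γ.E)) (hEsub : E ⊆ Γ.shift) (hEne : E.Nonempty)
    (hEclopen : Γ.ClopenIn E) (hE'sub : E' ⊆ Γ.shift) (hE'ne : E'.Nonempty)
    (hE'clopen : Γ.ClopenIn E')
    (f : ↥E ≃ₜ ↥E') (hf : Γ.RationalOn (Γ.homExt E E' ⇑f) E) :
    Γ.RationalOn (Γ.homExt E' E ⇑f.symm) E' ∧
    ∃ R : Subgroup (Equiv.Perm ↥E),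
      (R : Set (Equiv.Perm ↥E)) = {g | Γ.IsRatHomeo E g} :=
  inverse_rational_and_rational_group_general Γ hiso hcones E E' hEsub hEclopen hE'sub hE'clopen f
    hf
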